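/- Let K be a Henselian discretely valued field with residue field k and q ≥ 1. Let U_q^1(K) be the subgroup of K_q^M(K) generated by symbols {u, a₂, …, a_q} with u ≡ 1 modulo the maximal ideal. If L/K is a finite extension whose residue extension l/k is separable (or if every variety with an L-point is considered), and U_q^1(K) ⊆ N_{L/K}(K_q^M(L)) holds whenever 1 + m_K ⊆ N_{L/K}(Lˣ), then in particular for K = K₀((t)) and L = L₀((t)) with L₀/K₀ finite separable, U_q^1(K) ⊆ N_q(L/K). -/

import Mathlib

/-!
A generator `{u, a₂, …, a_q}` of `U_q^1(K)` is, by the projection formula, the norm of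
`{β, a₂, …, a_q}` as soon as `u = N_{L/K}(β)`; so it suffices to write every power series `f`
with constant coefficient `1` as a norm. As `L₀((t))/K₀((t))` is the localization at `t` of the
free extension `L₀⟦t⟧/K₀⟦t⟧`, this is a norm equation over power series. There
`N(1 + c tᵐ) ≡ 1 + Tr(c) tᵐ mod t²ᵐ`, and the trace of the separable extension `L₀/K₀` is
surjective, so a solution of `N x ≡ f mod tᵐ` is corrected by a factor `1 + c tᵐ` to one modulo
`tᵐ⁺¹`. The norm is `t`-adically continuous, so the `t`-adic limit of these corrections solves
`N x = f`.
-/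

open scoped TensorProduct

/-- The Steinberg subgroup of the `q`-fold tensor power of `Fˣ`: the subgroup generated by
elementary tensors `a₁ ⊗ ⋯ ⊗ a_q` with `a_i + a_j = 1` for some `i ≠ j`. -/
noncomputable def SteinbergSubgroup (F : Type*) [Field F] (q : ℕ) :
    AddSubgroup (⨂[ℤ] (_ : Fin q), Additive Fˣ) :=
  AddSubgroup.closure
    {z | ∃ a : Fin q → Fˣ, (∃ i j, i ≠ j ∧ ((a i : F) + (a j : F) = 1)) ∧
      z = PiTensorProduct.tprod ℤ (fun i => Additive.ofMul (a i))}

/-- The `q`-th Milnor K-group of a field `F`: the quotient of the `q`-fold tensor power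
(over `ℤ`) of `Fˣ` by the Steinberg relations. -/
noncomputable def MilnorK (F : Type*) [Field F] (q : ℕ) : Type _ :=
  (⨂[ℤ] (_ : Fin q), Additive Fˣ) ⧸ SteinbergSubgroup F q

noncomputable instance (F : Type*) [Field F] (q : ℕ) : AddCommGroup (MilnorK F q) :=
  inferInstanceAs (AddCommGroup ((⨂[ℤ] (_ : Fin q), Additive Fˣ) ⧸ SteinbergSubgroup F q))

/-- The symbol `{a₁, …, a_q}` in the Milnor K-group. -/
noncomputable def MilnorK.symbol {F : Type*} [Field F] {q : ℕ} (a : Fin q → Fˣ) : MilnorK F q :=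
  QuotientAddGroup.mk (PiTensorProduct.tprod ℤ (fun i => Additive.ofMul (a i)))

/-- Functoriality of Milnor K-groups: the restriction map along a field embedding. -/
noncomputable def MilnorK.map {F F' : Type*} [Field F] [Field F'] (φ : F →+* F') (q : ℕ) :
    MilnorK F q →+ MilnorK F' q :=
  QuotientAddGroup.map _ _
    ((PiTensorProduct.map (fun _ =>
      (AddMonoidHom.toIntLinearMap
        (MonoidHom.toAdditive (Units.map (φ : F →* F')))))).toAddMonoidHom) <| by
      rw [SteinbergSubgroup, ← AddSubgroup.map_le_iff_le_comap, AddMonoidHom.map_closure]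
      apply AddSubgroup.closure_mono
      rintro _ ⟨z, ⟨a, ⟨i, j, hij, hsum⟩, rfl⟩, rfl⟩
      refine ⟨fun i => Units.map (φ : F →* F') (a i), ⟨i, j, hij, ?_⟩, ?_⟩
      · simpa using congrArg φ hsum
      · rw [LinearMap.toAddMonoidHom_coe, PiTensorProduct.map_tprod]; rfl

open PowerSeries

namespace Module.Basis

variable {ι R A : Type*} [Fintype ι] [CommSemiring R] [CommSemiring A] [Algebra R A]
  (b : Basis ι R A)

noncomputable def powerSeries : Basis ι R⟦X⟧ A⟦X⟧ := .ofEquivFun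
  { toFun g i := PowerSeries.mk fun n => b.repr (coeff n g) i
    invFun f := PowerSeries.mk fun n => ∑ i, coeff n (f i) • b i
    map_add' x y := by
      funext i; ext n
      simp
    map_smul' r g := by
      funext i; ext n
      simp only [coeff_mk, smul_eq_mul, coeff_mul, Algebra.smul_def, algebraMap_apply'',
        coeff_map, map_sum, Finsupp.coe_finsetSum, Finset.sum_apply, RingHom.id_apply,
        Pi.smul_apply]
      refine Finset.sum_congr rfl fun p _ => ?_
      rw [← Algebra.smul_def, map_smul, Finsupp.smul_apply, smul_eq_mul]
    left_inv g := by
      ext n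
      simp [Basis.sum_repr]
    right_inv f := by
      classical
      funext i; ext n
      simp [Finsupp.single_apply] }

theorem powerSeries_repr_apply (g : A⟦X⟧) (i : ι) :
    b.powerSeries.repr g i = PowerSeries.mk fun n => b.repr (coeff n g) i := rfl

theorem powerSeries_repr_C (a : A) (i : ι) : b.powerSeries.repr (C a) i = C (b.repr a i) := by
  ext n
  simp only [powerSeries_repr_apply, coeff_mk, coeff_C]
  split_ifs <;> simp

theorem powerSeries_apply (i : ι) : b.powerSeries i = C (b i) := by
  classical
  refine b.powerSeries.repr.injective (Finsupp.ext fun j => ?_)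
  rw [powerSeries_repr_C, repr_self, repr_self, Finsupp.single_apply, Finsupp.single_apply]
  split_ifs <;> simp

theorem X_pow_dvd_powerSeries_repr {n : ℕ} {g : A⟦X⟧} (h : X ^ n ∣ g) (i : ι) :
    X ^ n ∣ b.powerSeries.repr g i := by
  rw [X_pow_dvd_iff] at h ⊢
  intro m hm
  simp [powerSeries_repr_apply, h m hm]

end Module.Basis

namespace PowerSeries

section Semiring

variable {R A : Type*} [CommSemiring R] [CommSemiring A] [Algebra R A]
  [Module.Free R A] [Module.Finite R A]

instance : Module.Free R⟦X⟧ A⟦X⟧ := .of_basis (Module.Free.chooseBasis R A).powerSeries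

instance : Module.Finite R⟦X⟧ A⟦X⟧ := .of_basis (Module.Free.chooseBasis R A).powerSeries

end Semiring

section Ring

variable {R A : Type*} [CommRing R] [CommRing A] [Algebra R A]

theorem eq_of_forall_X_pow_dvd_sub {f g : R⟦X⟧} (h : ∀ n, X ^ n ∣ f - g) : f = g := by
  ext k
  simpa [sub_eq_zero] using X_pow_dvd_iff.mp (h (k + 1)) k k.lt_succ_self

theorem exists_forall_X_pow_dvd_sub {f : ℕ → R⟦X⟧} (hf : ∀ n, X ^ n ∣ f (n + 1) - f n) :
    ∃ g, ∀ n, X ^ n ∣ g - f n := by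
  have hcauchy {m n : ℕ} (hmn : m ≤ n) : X ^ m ∣ f n - f m := by
    induction n, hmn using Nat.le_induction with
    | base => simp
    | succ n hmn ih =>
      rw [← sub_add_sub_cancel _ (f n)]
      exact dvd_add ((pow_dvd_pow X hmn).trans (hf n)) ih
  have hsmod {n : ℕ} {a b : R⟦X⟧} :
      a ≡ b [SMOD (Ideal.span {(X : R⟦X⟧)} ^ n • ⊤ : Submodule R⟦X⟧ R⟦X⟧)] ↔ X ^ n ∣ b - a := by
    rw [SModEq.sub_mem, smul_eq_mul, Ideal.mul_top, Ideal.span_singleton_pow,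
      Ideal.mem_span_singleton, ← dvd_neg, neg_sub]
  obtain ⟨g, hg⟩ := IsPrecomplete.prec (I := Ideal.span {(X : R⟦X⟧)}) inferInstance (f := f)
    fun hmn => hsmod.mpr (hcauchy hmn)
  exact ⟨g, fun n => hsmod.mp (hg n)⟩

variable [Module.Free R A] [Module.Finite R A]

theorem trace_C (a : A) : Algebra.trace R⟦X⟧ A⟦X⟧ (C a) = C (Algebra.trace R A a) := by
  classical
  let b := Module.Free.chooseBasis R A
  rw [Algebra.trace_eq_matrix_trace b.powerSeries, Algebra.trace_eq_matrix_trace b,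
    Matrix.trace, Matrix.trace, map_sum]
  refine Finset.sum_congr rfl fun i _ => ?_
  rw [Matrix.diag_apply, Matrix.diag_apply, Algebra.leftMulMatrix_eq_repr_mul,
    Algebra.leftMulMatrix_eq_repr_mul, b.powerSeries_apply, ← map_mul, b.powerSeries_repr_C]

theorem X_pow_dvd_norm_sub_norm {n : ℕ} {x y : A⟦X⟧} (h : X ^ n ∣ x - y) :
    X ^ n ∣ Algebra.norm R⟦X⟧ x - Algebra.norm R⟦X⟧ y := by
  classical
  let b := (Module.Free.chooseBasis R A).powerSeries
  rw [← Ideal.mem_span_singleton, ← Ideal.Quotient.eq_zero_iff_mem, map_sub, sub_eq_zero,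
    Algebra.norm_eq_matrix_det b, Algebra.norm_eq_matrix_det b, RingHom.map_det, RingHom.map_det]
  congr 1
  ext i j
  rw [RingHom.mapMatrix_apply, RingHom.mapMatrix_apply, Matrix.map_apply, Matrix.map_apply,
    Ideal.Quotient.eq, Ideal.mem_span_singleton, Algebra.leftMulMatrix_eq_repr_mul,
    Algebra.leftMulMatrix_eq_repr_mul, ← Finsupp.sub_apply, ← map_sub, ← sub_mul]
  exact Module.Basis.X_pow_dvd_powerSeries_repr _ (dvd_mul_of_dvd_left h _) i

theorem norm_one_add_X_pow_mul_C (a : A) (m : ℕ) :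
    ∃ r : R⟦X⟧, Algebra.norm R⟦X⟧ (1 + X ^ m * C a) =
      1 + C (Algebra.trace R A a) * X ^ m + r * (X ^ m) ^ 2 := by
  have hsmul : (X ^ m * C a : A⟦X⟧) = (X ^ m : R⟦X⟧) • C a := by
    rw [Algebra.smul_def, algebraMap_apply'', map_pow, map_X]
  rw [hsmul, ← trace_C]
  exact Algebra.norm_one_add_smul _ _

theorem exists_X_pow_dvd_sub_and_X_pow_succ_dvd_norm_sub
    (htr : Function.Surjective (Algebra.trace R A)) {f : R⟦X⟧} (hf : constantCoeff f = 1)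
    {n : ℕ} {x : A⟦X⟧} (hx : X ^ (n + 1) ∣ Algebra.norm R⟦X⟧ x - f) :
    ∃ y, X ^ (n + 1) ∣ y - x ∧ X ^ (n + 2) ∣ Algebra.norm R⟦X⟧ y - f := by
  obtain ⟨g, hg⟩ := hx
  have hNx : constantCoeff (Algebra.norm R⟦X⟧ x) = 1 := by
    simpa [hf, sub_eq_zero] using congrArg constantCoeff hg
  obtain ⟨c, hc⟩ := htr (-constantCoeff g)
  obtain ⟨r, hr⟩ := norm_one_add_X_pow_mul_C (R := R) c (n + 1)
  refine ⟨x * (1 + X ^ (n + 1) * C c), ⟨x * C c, by ring⟩, ?_⟩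
  have hexpand : Algebra.norm R⟦X⟧ (x * (1 + X ^ (n + 1) * C c)) - f =
      X ^ (n + 1) * (g + Algebra.norm R⟦X⟧ x * (C (Algebra.trace R A c) + r * X ^ (n + 1))) := by
    rw [map_mul, hr]
    linear_combination hg
  rw [hexpand, pow_succ]
  refine mul_dvd_mul_left _ (X_dvd_iff.mpr ?_)
  simp [hNx, hc]

theorem exists_norm_eq_of_constantCoeff_eq_one (htr : Function.Surjective (Algebra.trace R A))
    {f : R⟦X⟧} (hf : constantCoeff f = 1) : ∃ x : A⟦X⟧, Algebra.norm R⟦X⟧ x = f := by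
  choose! step hstep_sub hstep_norm using fun n (x : A⟦X⟧) =>
    exists_X_pow_dvd_sub_and_X_pow_succ_dvd_norm_sub htr hf (n := n) (x := x)
  let x : ℕ → A⟦X⟧ := fun n => Nat.rec 1 step n
  have hx (n : ℕ) : X ^ (n + 1) ∣ Algebra.norm R⟦X⟧ (x n) - f := by
    induction n with
    | zero => simp [x, X_dvd_iff, hf]
    | succ n ih => exact hstep_norm n _ ih
  obtain ⟨y, hy⟩ := exists_forall_X_pow_dvd_sub (f := x) fun n =>
    (pow_dvd_pow X n.le_succ).trans (hstep_sub n (x n) (hx n))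
  refine ⟨y, eq_of_forall_X_pow_dvd_sub fun n => ?_⟩
  rw [← sub_add_sub_cancel _ (Algebra.norm R⟦X⟧ (x n))]
  exact dvd_add (X_pow_dvd_norm_sub_norm (hy n)) ((pow_dvd_pow X n.le_succ).trans (hx n))

end Ring

end PowerSeries

namespace LaurentSeries

open scoped LaurentSeries

variable {R A : Type*} [CommRing R] [CommRing A] [Algebra R A]
  [Module.Free R A] [Module.Finite R A]
  [Algebra R⸨X⸩ A⸨X⸩] [IsScalarTower R⟦X⟧ R⸨X⸩ A⸨X⸩]

theorem norm_coe_powerSeries (x : A⟦X⟧) :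
    Algebra.norm R⸨X⸩ (x : A⸨X⸩) = Algebra.norm R⟦X⟧ x := by
  have : Algebra.algebraMapSubmonoid A⟦X⟧ (.powers (X : R⟦X⟧)) = .powers X := by
    rw [Algebra.algebraMapSubmonoid, Submonoid.map_powers, algebraMap_apply'', map_X]
  have : IsLocalization (Algebra.algebraMapSubmonoid A⟦X⟧ (.powers (X : R⟦X⟧))) A⸨X⸩ := by
    rw [this]; infer_instance
  have : IsScalarTower R⟦X⟧ A⟦X⟧ A⸨X⸩ := .of_algebraMap_eq' rfl
  exact Algebra.norm_localization R⟦X⟧ (.powers X) x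

end LaurentSeries

/-- Let `K₀` be a field, `L₀/K₀` finite separable, `K = K₀((t))`,
`L = L₀((t))` (with `L/K` via the coefficientwise embedding `σ`).  Let `U_q^1(K)` be the
subgroup of `K_{q+1}^M(K)` generated by symbols `{x₁, …, x_{q+1}}` with
`x₁ ∈ 1 + t·K₀[[t]]`.  Given the Milnor norm map `N : K_{q+1}^M(L) → K_{q+1}^M(K)`
satisfying the projection formula (norms of symbols whose last `q` entries come from `K`
are computed by the field norm on the first entry), we have `U_q^1(K) ⊆ N_{q+1}(L/K)`,
i.e. every element of `U_q^1(K)` is in the image of `N`. -/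
theorem u1_subset_norm_group_laurent
    (q : ℕ) (K₀ L₀ : Type*) [Field K₀] [Field L₀] [Algebra K₀ L₀]
    [FiniteDimensional K₀ L₀] [Algebra.IsSeparable K₀ L₀]
    (σ : LaurentSeries K₀ →+* LaurentSeries L₀)
    (hσ : ∀ f : PowerSeries K₀,
      σ (f : LaurentSeries K₀) = ((PowerSeries.map (algebraMap K₀ L₀) f : PowerSeries L₀) :
        LaurentSeries L₀))
    (N : MilnorK (LaurentSeries L₀) (q + 1) →+ MilnorK (LaurentSeries K₀) (q + 1))
    (hproj : ∀ (β : (LaurentSeries L₀)ˣ) (a : Fin q → (LaurentSeries K₀)ˣ),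
      N (MilnorK.symbol (Fin.cons β (fun i => Units.map (σ : LaurentSeries K₀ →* LaurentSeries L₀) (a i))))
        = MilnorK.symbol (Fin.cons
            (Units.map (letI : Algebra (LaurentSeries K₀) (LaurentSeries L₀) := σ.toAlgebra
              (Algebra.norm (LaurentSeries K₀) : LaurentSeries L₀ →* LaurentSeries K₀)) β) a)) :
    ∀ γ ∈ AddSubgroup.closure
        {γ : MilnorK (LaurentSeries K₀) (q + 1) |
          ∃ (u : (LaurentSeries K₀)ˣ) (rest : Fin q → (LaurentSeries K₀)ˣ)
            (f : PowerSeries K₀), PowerSeries.constantCoeff f = 1 ∧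
            (u : LaurentSeries K₀) = (f : LaurentSeries K₀) ∧
            γ = MilnorK.symbol (Fin.cons u rest)},
      γ ∈ Set.range N := by
  let := σ.toAlgebra
  have : IsScalarTower K₀⟦X⟧ (LaurentSeries K₀) (LaurentSeries L₀) :=
    .of_algebraMap_eq fun f => (hσ f).symm
  intro γ hγ
  refine (AddSubgroup.closure_le N.range).mpr ?_ hγ
  rintro _ ⟨u, rest, f, hf, hu, rfl⟩
  obtain ⟨x, hx⟩ := exists_norm_eq_of_constantCoeff_eq_one (A := L₀)
    (Algebra.trace_surjective K₀ L₀) hf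
  have hx0 : (x : LaurentSeries L₀) ≠ 0 := by
    refine (map_ne_zero_iff _ HahnSeries.ofPowerSeries_injective).mpr ?_
    rintro rfl
    rw [Algebra.norm_zero] at hx
    simp [← hx] at hf
  have hnorm : Units.map (Algebra.norm (LaurentSeries K₀) : LaurentSeries L₀ →* LaurentSeries K₀)
      (Units.mk0 _ hx0) = u :=
    Units.ext <| (LaurentSeries.norm_coe_powerSeries x).trans (by rw [hx, hu])
  exact ⟨_, (hproj _ rest).trans (by rw [hnorm])⟩
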